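/- arXiv:2510.20367 — 2 statements merged into one kernel-verified Lean document; each statement's English description precedes it below -/
import Mathlib

section
/- Let L ≥ 1, 0 < δ < 1/2, 0 ≤ d < 1 − δ, and let X_1,…,X_L be independent {0,1}-valued random variables with E[X_k] ≤ d for all k; set C := X_1 + ⋯ + X_L. Let A be any event with P(A) ≤ d^L, and suppose the extraction-success event E satisfies E ⊆ A ∪ {C ≥ (1−δ)L}. Then P(E) ≤ d^L + exp(−2((1−δ) − d)² L). -/
open MeasureTheory ProbabilityTheory

/-- Positivity of the Bernoulli mgf denominator. -/
lemma bern_pos (p s : ℝ) (hp0 : 0 ≤ p) (hp1 : p ≤ 1) :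
    0 < 1 - p + p * Real.exp s := by
  rcases eq_or_lt_of_le hp0 with h | h
  · simp [← h]
  · nlinarith [Real.exp_pos s, mul_pos h (Real.exp_pos s)]

/-- Hoeffding's lemma specialized to Bernoulli-type mgf, for `t ≥ 0`. -/
lemma bernoulli_mgf_le (p t : ℝ) (hp0 : 0 ≤ p) (hp1 : p ≤ 1) (ht : 0 ≤ t) :
    1 - p + p * Real.exp t ≤ Real.exp (p * t + t ^ 2 / 8) := by
  set D : ℝ → ℝ := fun s => 1 - p + p * Real.exp s with hDdef
  have hD : ∀ s, 0 < D s := fun s => bern_pos p s hp0 hp1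
  -- the auxiliary function g
  set g : ℝ → ℝ := fun s => s / 4 - p * Real.exp s / D s with hgdef
  have hg_deriv : ∀ s, HasDerivAt g
      (1 / 4 - p * Real.exp s * (1 - p) / (D s) ^ 2) s := by
    intro s
    have hnum : HasDerivAt (fun s => p * Real.exp s) (p * Real.exp s) s :=
      (Real.hasDerivAt_exp s).const_mul p
    have hden : HasDerivAt D (p * Real.exp s) s := by
      exact ((Real.hasDerivAt_exp s).const_mul p).const_add (1 - p)
    have hdiv := hnum.div hden (hD s).ne'
    have hid : HasDerivAt (fun s : ℝ => s / 4) (1 / 4) s := by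
      simpa using (hasDerivAt_id s).div_const 4
    have := hid.sub hdiv
    refine this.congr_deriv (Eq.symm ?_)
    have := (hD s).ne'
    field_simp [hDdef]
    ring
  have hg_deriv_nonneg : ∀ s, 0 ≤ 1 / 4 - p * Real.exp s * (1 - p) / (D s) ^ 2 := by
    intro s
    have h2 : (0:ℝ) < (D s) ^ 2 := pow_pos (hD s) 2
    rw [sub_nonneg, div_le_iff₀ h2]
    have hE := Real.exp_pos s
    nlinarith [sq_nonneg (1 - p - p * Real.exp s)]
  have hg_mono : Monotone g := by
    refine monotone_of_deriv_nonneg (fun s => (hg_deriv s).differentiableAt) (fun s => ?_)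
    rw [(hg_deriv s).deriv]; exact hg_deriv_nonneg s
  have hg0 : g 0 = -p := by simp [hgdef, hDdef]
  -- the main function f
  set f : ℝ → ℝ := fun s => p * s + s ^ 2 / 8 - Real.log (D s) with hfdef
  have hf_deriv : ∀ s, HasDerivAt f (p + g s) s := by
    intro s
    have hden : HasDerivAt D (p * Real.exp s) s := by
      exact ((Real.hasDerivAt_exp s).const_mul p).const_add (1 - p)
    have hlog : HasDerivAt (fun s => Real.log (D s)) (p * Real.exp s / D s) s :=
      hden.log (hD s).ne'
    have hpoly : HasDerivAt (fun s : ℝ => p * s + s ^ 2 / 8) (p + s * 2 / 8) s := by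
      have h1 : HasDerivAt (fun s : ℝ => p * s) p s := by
        simpa using (hasDerivAt_id s).const_mul p
      have h2 : HasDerivAt (fun s : ℝ => s ^ 2 / 8) ((2 : ℕ) * s ^ 1 / 8) s :=
        (hasDerivAt_pow 2 s).div_const 8
      exact (h1.add h2).congr_deriv (by push_cast; ring)
    have := hpoly.sub hlog
    refine this.congr_deriv (Eq.symm ?_)
    simp only [hgdef]
    ring
  have hf_mono : MonotoneOn f (Set.Ici 0) := by
    refine monotoneOn_of_deriv_nonneg (convex_Ici 0)
      (fun s _ => ((hf_deriv s).differentiableAt.continuousAt).continuousWithinAt)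
      (fun s _ => (hf_deriv s).differentiableAt.differentiableWithinAt)
      (fun s hs => ?_)
    rw [(hf_deriv s).deriv]
    have : g 0 ≤ g s := hg_mono (le_of_lt (by simpa using hs))
    rw [hg0] at this
    linarith
  have hf0 : f 0 = 0 := by simp [hfdef, hDdef]
  have hft : 0 ≤ f t := by
    have := hf_mono (Set.self_mem_Ici) (Set.mem_Ici.mpr ht) ht
    rwa [hf0] at this
  have hlog : Real.log (D t) ≤ p * t + t ^ 2 / 8 := by
    simp only [hfdef, sub_nonneg] at hft; linarith
  calc D t = Real.exp (Real.log (D t)) := (Real.exp_log (hD t)).symm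
    _ ≤ Real.exp (p * t + t ^ 2 / 8) := Real.exp_le_exp.mpr hlog

/-- Adversary success bound (boxed theorem): with `L ≥ 1`, `0 < δ < 1/2`,
`0 ≤ d < 1 − δ`, independent `{0,1}`-valued `X_k` with `E[X_k] ≤ d` and
`C := ∑ X_k`, any event `A` with `P(A) ≤ d^L`, and an extraction-success event
`E ⊆ A ∪ {C ≥ (1−δ)L}`, we have `P(E) ≤ d^L + exp(−2((1−δ)−d)² L)`. -/
theorem adversary_success_bound {Ω : Type*} [MeasurableSpace Ω]
    (μ : Measure Ω) [IsProbabilityMeasure μ]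
    (L : ℕ) (hL : 1 ≤ L) (δ d : ℝ) (hδ0 : 0 < δ) (hδ : δ < 1 / 2)
    (hd0 : 0 ≤ d) (hd : d < 1 - δ)
    (X : Fin L → Ω → ℝ) (hXmeas : ∀ k, Measurable (X k))
    (hXind : iIndepFun X μ)
    (hX01 : ∀ k ω, X k ω = 0 ∨ X k ω = 1)
    (hXmean : ∀ k, μ[X k] ≤ d)
    (A E : Set Ω) (hA : μ A ≤ ENNReal.ofReal (d ^ L))
    (hE : E ⊆ A ∪ {ω | (1 - δ) * L ≤ ∑ k, X k ω}) :
    μ E ≤ ENNReal.ofReal (d ^ L) +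
      ENNReal.ofReal (Real.exp (-2 * ((1 - δ) - d) ^ 2 * L)) := by
  set ε : ℝ := (1 - δ) - d with hεdef
  have hε : 0 < ε := by simp only [hεdef]; linarith
  set t : ℝ := 4 * ε with htdef
  have ht0 : 0 < t := by positivity
  have hd1 : d ≤ 1 := by linarith
  have hXbd : ∀ k ω, 0 ≤ X k ω ∧ X k ω ≤ 1 := by
    intro k ω; rcases hX01 k ω with h | h <;> simp [h]
  have hXint : ∀ k, Integrable (X k) μ := fun k =>
    Integrable.mono' (integrable_const 1) (hXmeas k).aestronglyMeasurable
      (Filter.Eventually.of_forall fun ω => by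
        rcases hX01 k ω with h | h <;> simp [h])
  have hexp_eq : ∀ k ω, Real.exp (t * X k ω) = 1 + (Real.exp t - 1) * X k ω := by
    intro k ω; rcases hX01 k ω with h | h <;> simp [h]
  have hexpint : ∀ k, Integrable (fun ω => Real.exp (t * X k ω)) μ := by
    intro k
    simp_rw [hexp_eq k]
    exact (integrable_const 1).add ((hXint k).const_mul _)
  have hmgf_k : ∀ k, mgf (X k) μ t ≤ Real.exp (d * t + t ^ 2 / 8) := by
    intro k
    have hmgf_eq : mgf (X k) μ t = 1 + (Real.exp t - 1) * μ[X k] := by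
      rw [mgf]
      simp_rw [hexp_eq k]
      rw [integral_add (integrable_const 1) ((hXint k).const_mul _),
        integral_const, integral_const_mul]
      simp
    have h1 : (1:ℝ) ≤ Real.exp t := Real.one_le_exp ht0.le
    have h2 : (Real.exp t - 1) * μ[X k] ≤ (Real.exp t - 1) * d :=
      mul_le_mul_of_nonneg_left (hXmean k) (by linarith)
    have h3 := bernoulli_mgf_le d t hd0 hd1 ht0.le
    rw [hmgf_eq]
    nlinarith [h3]
  -- integrability of the exponential of the sum
  have hSmeas : Measurable (∑ k, X k) := by
    have := Finset.measurable_sum (Finset.univ : Finset (Fin L)) fun k _ => hXmeas k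
    convert this using 1
    ext ω; simp [Finset.sum_apply]
  have hSle : ∀ ω, (∑ k, X k) ω ≤ (L : ℝ) := by
    intro ω
    rw [Finset.sum_apply]
    calc ∑ k, X k ω ≤ ∑ _k : Fin L, (1:ℝ) :=
          Finset.sum_le_sum fun k _ => (hXbd k ω).2
      _ = (L : ℝ) := by simp
  have hint_S : Integrable (fun ω => Real.exp (t * (∑ k, X k) ω)) μ := by
    refine Integrable.mono' (integrable_const (Real.exp (t * L)))
      ((hSmeas.const_mul t).exp.aestronglyMeasurable)
      (Filter.Eventually.of_forall fun ω => ?_)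
    rw [Real.norm_eq_abs, abs_of_pos (Real.exp_pos _)]
    exact Real.exp_le_exp.mpr (mul_le_mul_of_nonneg_left (hSle ω) ht0.le)
  -- Chernoff bound
  have hcher := measure_ge_le_exp_mul_mgf (μ := μ) (X := ∑ k, X k)
    ((1 - δ) * L) ht0.le hint_S
  have hprod : mgf (∑ k, X k) μ t ≤ Real.exp ((L : ℝ) * (d * t + t ^ 2 / 8)) := by
    rw [hXind.mgf_sum hXmeas Finset.univ]
    calc ∏ k, mgf (X k) μ t ≤ ∏ _k : Fin L, Real.exp (d * t + t ^ 2 / 8) :=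
          Finset.prod_le_prod (fun k _ => mgf_nonneg) (fun k _ => hmgf_k k)
      _ = Real.exp ((L : ℝ) * (d * t + t ^ 2 / 8)) := by
          rw [Finset.prod_const, Finset.card_univ, Fintype.card_fin,
            ← Real.exp_nat_mul]
  have hfinal : (μ {ω | (1 - δ) * L ≤ (∑ k, X k) ω}).toReal ≤
      Real.exp (-2 * ((1 - δ) - d) ^ 2 * L) := by
    refine hcher.trans ?_
    calc Real.exp (-t * ((1 - δ) * L)) * mgf (∑ k, X k) μ t
        ≤ Real.exp (-t * ((1 - δ) * L)) * Real.exp ((L : ℝ) * (d * t + t ^ 2 / 8)) := by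
          exact mul_le_mul_of_nonneg_left hprod (Real.exp_pos _).le
      _ = Real.exp (-2 * ((1 - δ) - d) ^ 2 * L) := by
          rw [← Real.exp_add]
          congr 1
          simp only [htdef, hεdef]
          ring
  have hsetEq : {ω | (1 - δ) * (L:ℝ) ≤ ∑ k, X k ω} = {ω | (1 - δ) * (L:ℝ) ≤ (∑ k, X k) ω} := by
    ext ω; simp [Finset.sum_apply]
  have hB : μ {ω | (1 - δ) * (L:ℝ) ≤ ∑ k, X k ω} ≤
      ENNReal.ofReal (Real.exp (-2 * ((1 - δ) - d) ^ 2 * L)) := by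
    rw [hsetEq]
    rw [ENNReal.le_ofReal_iff_toReal_le (measure_ne_top μ _) (Real.exp_pos _).le]
    exact hfinal
  calc μ E ≤ μ (A ∪ {ω | (1 - δ) * L ≤ ∑ k, X k ω}) := measure_mono hE
    _ ≤ μ A + μ {ω | (1 - δ) * L ≤ ∑ k, X k ω} := measure_union_le _ _
    _ ≤ ENNReal.ofReal (d ^ L) +
        ENNReal.ofReal (Real.exp (-2 * ((1 - δ) - d) ^ 2 * L)) := add_le_add hA hB
end

section
/- Define Attention(Q,K,V) := softmax(Q·Kᵀ/√d)·V for real d × n matrices Q, K, V, where softmax is applied row-wise: softmax(M)(r,c) = exp(M(r,c)) / Σ_k exp(M(r,k)). Let R := swaprows(I,i,j) be the d × d swap matrix for 1 ≤ i < j ≤ d. Then Attention(R·Q, R·K, R·V) = R·Attention(Q,K,V). -/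
open Matrix

/-- Row-wise softmax of a real `d × d` matrix. -/
noncomputable def softmax {d : ℕ} (M : Matrix (Fin d) (Fin d) ℝ) :
    Matrix (Fin d) (Fin d) ℝ :=
  fun r c => Real.exp (M r c) / ∑ k, Real.exp (M r k)

/-- Scaled dot-product attention `Attention(Q,K,V) = softmax(Q⬝Kᵀ/√d) ⬝ V`
for `d × n` real matrices `Q, K, V`. -/
noncomputable def attention {d n : ℕ} (Q K V : Matrix (Fin d) (Fin n) ℝ) :
    Matrix (Fin d) (Fin n) ℝ :=
  softmax ((Real.sqrt d)⁻¹ • (Q * Kᵀ)) * V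

/-- Per-head equivariance: with `R := swaprows(I,i,j)` the `d × d` swap matrix
for `i < j` (and `d ≥ 1`), `Attention(R⬝Q, R⬝K, R⬝V) = R ⬝ Attention(Q,K,V)`. -/
theorem attention_swap_equivariant {d n : ℕ} (hd : 1 ≤ d)
    (i j : Fin d) (hij : i < j)
    (R : Matrix (Fin d) (Fin d) ℝ)
    (hR : R = (1 : Matrix (Fin d) (Fin d) ℝ).submatrix (Equiv.swap i j) id)
    (Q K V : Matrix (Fin d) (Fin n) ℝ) :
    attention (R * Q) (R * K) (R * V) = R * attention Q K V := by
  set σ := Equiv.swap i j with hσ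
  have hRmul : ∀ {m : ℕ} (M : Matrix (Fin d) (Fin m) ℝ),
      R * M = M.submatrix σ id := by
    intro m M
    ext a b
    simp [hR, Matrix.mul_apply, Matrix.one_apply, Matrix.submatrix_apply]
  rw [hRmul Q, hRmul K, hRmul V, hRmul (attention Q K V)]
  ext a b
  simp only [attention, softmax, Matrix.mul_apply, Matrix.submatrix_apply,
    Matrix.transpose_apply, Matrix.smul_apply, smul_eq_mul, id]
  have hden : ∀ x : Fin d,
      (∑ k, Real.exp ((Real.sqrt d)⁻¹ * ∑ m, Q x m * K (σ k) m))
        = ∑ k, Real.exp ((Real.sqrt d)⁻¹ * ∑ m, Q x m * K k m) :=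
    fun x => Equiv.sum_comp σ (fun k => Real.exp ((Real.sqrt d)⁻¹ * ∑ m, Q x m * K k m))
  calc (∑ c, Real.exp ((Real.sqrt d)⁻¹ * ∑ m, Q (σ a) m * K (σ c) m) /
          (∑ k, Real.exp ((Real.sqrt d)⁻¹ * ∑ m, Q (σ a) m * K (σ k) m)) * V (σ c) b)
      = ∑ c, Real.exp ((Real.sqrt d)⁻¹ * ∑ m, Q (σ a) m * K c m) /
          (∑ k, Real.exp ((Real.sqrt d)⁻¹ * ∑ m, Q (σ a) m * K k m)) * V c b := by
        rw [← Equiv.sum_comp σ (fun c => Real.exp ((Real.sqrt d)⁻¹ * ∑ m, Q (σ a) m * K c m) /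
          (∑ k, Real.exp ((Real.sqrt d)⁻¹ * ∑ m, Q (σ a) m * K k m)) * V c b)]
        simp only [hden]
    _ = _ := rfl
end
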